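/- arXiv:2510.27160 — 7 statements merged into one kernel-verified Lean document; each statement's English description precedes it below -/
import Mathlib

section
/- Let V be a finite-dimensional real inner product space, S ⊆ V a nonempty closed convex set, and Δ ⊆ ℝ^n a nonempty compact set. Let f : V → ℝ be convex, subdifferentiable at every point of S, with ‖d‖ ≤ L_f for all x ∈ S and d ∈ ∂f(x). For every δ ∈ Δ let g(·;δ) : V → ℝ be convex, subdifferentiable at every point of S, with ‖d‖ ≤ L_g for all x ∈ S and d ∈ ∂_x g(x;δ); for every x ∈ S assume g(x;·) is continuous on Δ. Set G(x) := max_{δ∈Δ} g(x;δ) and L := max{L_f, L_g}, and suppose the set S* of minimizers of f over {x ∈ S : G(x) ≤ 0} is nonempty with optimal value f*. Fix ε > 0 and sequences (x_k) in S, (δ_k) in Δ and (d_k) in V such that for every k: if g(x_k;δ_k) ≤ ε then d_k ∈ ∂f(x_k), d_k ≠ 0, and x_{k+1} = P_S(x_k − (ε/‖d_k‖²) d_k); otherwise d_k ∈ ∂_x g(x_k;δ_k), d_k ≠ 0, and x_{k+1} = P_S(x_k − (g(x_k;δ_k)/‖d_k‖²) d_k). Then for every positive integer N with N ≥ L² ·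 dist(x_1, S*)² / ε², the set I_N := {k ∈ {1,…,N} : g(x_k;δ_k) ≤ ε} is nonempty, and for every k* ∈ I_N minimizing f(x_k) over k ∈ I_N one has f(x_{k*}) ≤ f* + ε and G(x_{k*}) ≤ ε + (G(x_{k*}) − g(x_{k*};δ_{k*})). -/
/-!
Each iteration is a Polyak-type projected subgradient step. Unless some iterate `x k` with
`g (x k) (δ k) ≤ ε` already has `f (x k) ≤ f* + ε`, the subgradient inequality gives, for every
optimal point `z`, `⟪d k, x k - z⟫ ≥ a` with `a = f (x k) - f* > ε` (objective step, step length
`t = ε`) or `a = g (x k) (δ k) = t > ε` (constraint step). Since projecting onto `S` does not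
increase distances to points of `S`, `‖x (k+1) - z‖² ≤ ‖x k - z‖² - t a / ‖d k‖²`, and
`t a / ‖d k‖² > ε² / L²` does not depend on `z`, so the strict inequality survives taking the
infimum over `z`. After `N` steps the squared distance from `x 1` to the optimal set would exceed
`N ε² / L² ≥ dist (x 1, S*)²`.
-/

open Metric Set
open scoped RealInnerProductSpace

/-- The subdifferential of `f : V → ℝ` at `x`. -/
def subdiff {V : Type*} [NormedAddCommGroup V] [InnerProductSpace ℝ V]
    (f : V → ℝ) (x : V) : Set V :=
  {d | ∀ y, f x + (inner ℝ d (y - x) : ℝ) ≤ f y}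

section UniformDecrease

variable {X : Type*} [PseudoMetricSpace X] {x : ℕ → X} {T : Set X} {b : ℝ} {N : ℕ}

theorem exists_lt_forall_dist_sq_le_sub (hN : 1 ≤ N)
    (hstep : ∀ k ∈ Finset.Icc 1 N, ∃ c, b < c ∧
      ∀ z ∈ T, dist (x (k + 1)) z ^ 2 ≤ dist (x k) z ^ 2 - c) :
    ∃ C, N * b < C ∧ ∀ z ∈ T, dist (x (N + 1)) z ^ 2 ≤ dist (x 1) z ^ 2 - C := by
  induction N, hN using Nat.le_induction with
  | base =>
    obtain ⟨c, hbc, hc⟩ := hstep 1 (by simp)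
    exact ⟨c, by simpa using hbc, hc⟩
  | succ M hM ih =>
    obtain ⟨C, hbC, hC⟩ := ih fun k hk => hstep k (Finset.Icc_subset_Icc_right M.le_succ hk)
    obtain ⟨c, hbc, hc⟩ := hstep (M + 1) (Finset.mem_Icc.2 ⟨by omega, le_rfl⟩)
    refine ⟨C + c, by push_cast; linarith, fun z hz => ?_⟩
    linarith [hC z hz, hc z hz]

theorem mul_lt_infDist_sq (hT : T.Nonempty) (hN : 1 ≤ N)
    (hstep : ∀ k ∈ Finset.Icc 1 N, ∃ c, b < c ∧
      ∀ z ∈ T, dist (x (k + 1)) z ^ 2 ≤ dist (x k) z ^ 2 - c) :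
    N * b < infDist (x 1) T ^ 2 := by
  obtain ⟨C, hbC, hC⟩ := exists_lt_forall_dist_sq_le_sub hN hstep
  have hsqrt : √C ≤ infDist (x 1) T := by
    refine (le_infDist hT).2 fun z hz => Real.sqrt_le_iff.2 ⟨dist_nonneg, ?_⟩
    linarith [hC z hz, sq_nonneg (dist (x (N + 1)) z)]
  exact hbC.trans_le (Real.sqrt_le_iff.1 hsqrt).2

end UniformDecrease

section PolyakStep

variable {V : Type*} [NormedAddCommGroup V] [InnerProductSpace ℝ V]

theorem sub_le_inner_of_mem_subdiff {f : V → ℝ} {x d : V} (hd : d ∈ subdiff f x) (z : V) :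
    f x - f z ≤ ⟪d, x - z⟫ := by
  have h := hd z
  rw [← neg_sub, inner_neg_right] at h
  linarith

theorem norm_sub_le_of_forall_norm_sub_le {S : Set V} (hS : Convex ℝ S) {y p z : V}
    (hp : p ∈ S) (hmin : ∀ w ∈ S, ‖y - p‖ ≤ ‖y - w‖) (hz : z ∈ S) : ‖p - z‖ ≤ ‖y - z‖ := by
  have : Nonempty S := ⟨⟨p, hp⟩⟩
  have hbdd : BddBelow (range fun w : S => ‖y - (w : V)‖) :=
    ⟨0, by rintro _ ⟨w, rfl⟩; exact norm_nonneg _⟩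
  have hinf : ‖y - p‖ = ⨅ w : S, ‖y - (w : V)‖ :=
    le_antisymm (le_ciInf fun w => hmin w w.2) (ciInf_le hbdd ⟨p, hp⟩)
  have hvar : ⟪y - p, z - p⟫ ≤ 0 := (norm_eq_iInf_iff_real_inner_le_zero hS hp).1 hinf z hz
  have hexp : ‖y - z‖ ^ 2 = ‖y - p‖ ^ 2 - 2 * ⟪y - p, z - p⟫ + ‖p - z‖ ^ 2 := by
    rw [show y - z = (y - p) - (z - p) by abel, norm_sub_sq_real, norm_sub_rev z p]
  exact pow_le_pow_iff_left₀ (norm_nonneg _) (norm_nonneg _) two_ne_zero |>.1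
    (by nlinarith [sq_nonneg ‖y - p‖])

theorem sq_norm_sub_le_of_polyak_step {S : Set V} (hS : Convex ℝ S) {x d p z : V} {t a : ℝ}
    (hp : p ∈ S)
    (hmin : ∀ w ∈ S, ‖x - (t / ‖d‖ ^ 2) • d - p‖ ≤ ‖x - (t / ‖d‖ ^ 2) • d - w‖)
    (hz : z ∈ S) (ht : 0 ≤ t) (hta : t ≤ a) (ha : a ≤ ⟪d, x - z⟫) :
    ‖p - z‖ ^ 2 ≤ ‖x - z‖ ^ 2 - t * a / ‖d‖ ^ 2 := by
  set s := t / ‖d‖ ^ 2 with hs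
  have hs0 : 0 ≤ s := by positivity
  have hss : s ^ 2 * ‖d‖ ^ 2 = s * t := by
    rcases eq_or_ne ‖d‖ 0 with h | h
    · simp [hs, h]
    · rw [hs]; field_simp
  have hexp : ‖x - s • d - z‖ ^ 2 = ‖x - z‖ ^ 2 - 2 * s * ⟪d, x - z⟫ + s ^ 2 * ‖d‖ ^ 2 := by
    rw [show x - s • d - z = (x - z) - s • d by abel, norm_sub_sq_real, norm_smul,
      real_inner_smul_right, real_inner_comm, mul_pow, Real.norm_eq_abs, sq_abs]
    ring
  have hproj := norm_sub_le_of_forall_norm_sub_le hS hp hmin hz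
  have hsa : s * a ≤ s * ⟪d, x - z⟫ := mul_le_mul_of_nonneg_left ha hs0
  have hst : s * t ≤ s * a := mul_le_mul_of_nonneg_left hta hs0
  rw [mul_div_right_comm, ← hs]
  nlinarith [pow_le_pow_left₀ (norm_nonneg _) hproj 2]

end PolyakStep

theorem sq_div_sq_lt_mul_div_sq {ε t a q L : ℝ} (hε : 0 < ε) (hεt : ε ≤ t) (hεa : ε < a)
    (hq : 0 < q) (hqL : q ≤ L) : ε ^ 2 / L ^ 2 < t * a / q ^ 2 := by
  calc ε ^ 2 / L ^ 2 ≤ ε ^ 2 / q ^ 2 := by gcongr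
    _ < t * a / q ^ 2 := by gcongr; nlinarith

theorem stmt0_general {V : Type*} [NormedAddCommGroup V] [InnerProductSpace ℝ V] {n : ℕ}
    -- the constraint set S
    (S : Set V) (hScv : Convex ℝ S)
    -- the compact index set Δ
    (Δ : Set (EuclideanSpace ℝ (Fin n))) (hΔcp : IsCompact Δ)
    -- the objective f
    (f : V → ℝ) (Lf : ℝ)
    (hLf : ∀ x ∈ S, ∀ d ∈ subdiff f x, ‖d‖ ≤ Lf)
    -- the constraint functions g(·;δ)
    (g : V → EuclideanSpace ℝ (Fin n) → ℝ)
    (Lg : ℝ)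
    (hLg : ∀ δ ∈ Δ, ∀ x ∈ S, ∀ d ∈ subdiff (fun z => g z δ) x, ‖d‖ ≤ Lg)
    (hgcont : ∀ x ∈ S, ContinuousOn (g x) Δ)
    -- G and L
    (G : V → ℝ) (hG : ∀ x, G x = sSup (g x '' Δ))
    (L : ℝ) (hL : L = max Lf Lg)
    -- the set of optimal solutions and the optimal value
    (Sstar : Set V)
    (hSstar : Sstar = {x | x ∈ S ∧ G x ≤ 0 ∧ ∀ y ∈ S, G y ≤ 0 → f x ≤ f y})
    (hSstarne : Sstar.Nonempty)
    (fstar : ℝ) (hfstar : ∀ x ∈ Sstar, f x = fstar)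
    -- the tolerance, the metric projection onto S, and the iterates
    (ε : ℝ) (hε : 0 < ε)
    (proj : V → V)
    (hproj : ∀ y, proj y ∈ S ∧ ∀ z ∈ S, ‖y - proj y‖ ≤ ‖y - z‖)
    (x : ℕ → V) (δ : ℕ → EuclideanSpace ℝ (Fin n)) (d : ℕ → V)
    (hxS : ∀ k, 1 ≤ k → x k ∈ S) (hδΔ : ∀ k, 1 ≤ k → δ k ∈ Δ)
    (hstep : ∀ k, 1 ≤ k →
      (g (x k) (δ k) ≤ ε →
        d k ∈ subdiff f (x k) ∧ d k ≠ 0 ∧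
          x (k + 1) = proj (x k - (ε / ‖d k‖ ^ 2) • d k)) ∧
      (ε < g (x k) (δ k) →
        d k ∈ subdiff (fun z => g z (δ k)) (x k) ∧ d k ≠ 0 ∧
          x (k + 1) = proj (x k - (g (x k) (δ k) / ‖d k‖ ^ 2) • d k)))
    -- the number of iterations
    (N : ℕ) (hN1 : 1 ≤ N)
    (hN : (N : ℝ) ≥ L ^ 2 * Metric.infDist (x 1) Sstar ^ 2 / ε ^ 2) :
    (∃ k ∈ Finset.Icc 1 N, g (x k) (δ k) ≤ ε) ∧
      ∀ kstar ∈ Finset.Icc 1 N, g (x kstar) (δ kstar) ≤ ε →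
        (∀ k ∈ Finset.Icc 1 N, g (x k) (δ k) ≤ ε → f (x kstar) ≤ f (x k)) →
        f (x kstar) ≤ fstar + ε ∧
          G (x kstar) ≤ ε + (G (x kstar) - g (x kstar) (δ kstar)) := by
  have hdir : ∀ k, 1 ≤ k → d k ≠ 0 ∧ ‖d k‖ ≤ L := by
    intro k hk
    rcases le_or_gt (g (x k) (δ k)) ε with h | h
    · obtain ⟨hd, hd0, -⟩ := (hstep k hk).1 h
      exact ⟨hd0, (hLf _ (hxS k hk) _ hd).trans (hL ▸ le_max_left _ _)⟩
    · obtain ⟨hd, hd0, -⟩ := (hstep k hk).2 h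
      exact ⟨hd0, (hLg _ (hδΔ k hk) _ (hxS k hk) _ hd).trans (hL ▸ le_max_right _ _)⟩
  have hopt : ∀ z ∈ Sstar, z ∈ S ∧ f z = fstar ∧ ∀ δ' ∈ Δ, g z δ' ≤ 0 := by
    intro z hz
    obtain ⟨hzS, hGz, -⟩ := hSstar ▸ hz
    refine ⟨hzS, hfstar z hz, fun δ' hδ' => le_trans ?_ (hG z ▸ hGz)⟩
    exact le_csSup (hΔcp.image_of_continuousOn (hgcont z hzS)).bddAbove (mem_image_of_mem _ hδ')
  have hgood : ∃ k ∈ Finset.Icc 1 N, g (x k) (δ k) ≤ ε ∧ f (x k) ≤ fstar + ε := by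
    by_contra! hbad
    have hdecr : ∀ k ∈ Finset.Icc 1 N, ∃ c, ε ^ 2 / L ^ 2 < c ∧
        ∀ z ∈ Sstar, dist (x (k + 1)) z ^ 2 ≤ dist (x k) z ^ 2 - c := by
      intro k hk
      have hk1 := (Finset.mem_Icc.1 hk).1
      obtain ⟨hd0, hdL⟩ := hdir k hk1
      simp only [dist_eq_norm]
      rcases le_or_gt (g (x k) (δ k)) ε with h | h
      · obtain ⟨hd, -, hnext⟩ := (hstep k hk1).1 h
        have hgap := hbad k hk h
        refine ⟨ε * (f (x k) - fstar) / ‖d k‖ ^ 2, sq_div_sq_lt_mul_div_sq hε le_rfl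
          (by linarith) (norm_pos_iff.2 hd0) hdL, fun z hz => ?_⟩
        obtain ⟨hzS, hfz, -⟩ := hopt z hz
        rw [hnext]
        exact sq_norm_sub_le_of_polyak_step hScv (hproj _).1 (hproj _).2 hzS hε.le
          (by linarith) (hfz ▸ sub_le_inner_of_mem_subdiff hd z)
      · obtain ⟨hd, -, hnext⟩ := (hstep k hk1).2 h
        refine ⟨g (x k) (δ k) * g (x k) (δ k) / ‖d k‖ ^ 2, sq_div_sq_lt_mul_div_sq hε h.le h
          (norm_pos_iff.2 hd0) hdL, fun z hz => ?_⟩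
        obtain ⟨hzS, -, hgz⟩ := hopt z hz
        rw [hnext]
        exact sq_norm_sub_le_of_polyak_step hScv (hproj _).1 (hproj _).2 hzS (hε.trans h).le
          le_rfl (by linarith [sub_le_inner_of_mem_subdiff hd z, hgz _ (hδΔ k hk1)])
    have hL0 : 0 < L := (norm_pos_iff.2 (hdir 1 le_rfl).1).trans_le (hdir 1 le_rfl).2
    have hlt := mul_lt_infDist_sq hSstarne hN1 hdecr
    rw [mul_div_assoc', div_lt_iff₀ (by positivity)] at hlt
    rw [ge_iff_le, div_le_iff₀ (by positivity)] at hN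
    linarith
  obtain ⟨k₀, hk₀, hgk₀, hfk₀⟩ := hgood
  exact ⟨⟨k₀, hk₀, hgk₀⟩, fun kstar _ hgk hmin => ⟨(hmin k₀ hk₀ hgk₀).trans hfk₀, by linarith⟩⟩

theorem stmt0 {V : Type*} [NormedAddCommGroup V] [InnerProductSpace ℝ V]
    [FiniteDimensional ℝ V] {n : ℕ}
    -- the constraint set S
    (S : Set V) (hSne : S.Nonempty) (hScl : IsClosed S) (hScv : Convex ℝ S)
    -- the compact index set Δ
    (Δ : Set (EuclideanSpace ℝ (Fin n))) (hΔne : Δ.Nonempty) (hΔcp : IsCompact Δ)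
    -- the objective f
    (f : V → ℝ) (hfcvx : ConvexOn ℝ Set.univ f)
    (Lf : ℝ) (hfsub : ∀ x ∈ S, (subdiff f x).Nonempty)
    (hLf : ∀ x ∈ S, ∀ d ∈ subdiff f x, ‖d‖ ≤ Lf)
    -- the constraint functions g(·;δ)
    (g : V → EuclideanSpace ℝ (Fin n) → ℝ)
    (hgcvx : ∀ δ ∈ Δ, ConvexOn ℝ Set.univ fun x => g x δ)
    (Lg : ℝ) (hgsub : ∀ δ ∈ Δ, ∀ x ∈ S, (subdiff (fun z => g z δ) x).Nonempty)
    (hLg : ∀ δ ∈ Δ, ∀ x ∈ S, ∀ d ∈ subdiff (fun z => g z δ) x, ‖d‖ ≤ Lg)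
    (hgcont : ∀ x ∈ S, ContinuousOn (g x) Δ)
    -- G and L
    (G : V → ℝ) (hG : ∀ x, G x = sSup (g x '' Δ))
    (L : ℝ) (hL : L = max Lf Lg)
    -- the set of optimal solutions and the optimal value
    (Sstar : Set V)
    (hSstar : Sstar = {x | x ∈ S ∧ G x ≤ 0 ∧ ∀ y ∈ S, G y ≤ 0 → f x ≤ f y})
    (hSstarne : Sstar.Nonempty)
    (fstar : ℝ) (hfstar : ∀ x ∈ Sstar, f x = fstar)
    -- the tolerance, the metric projection onto S, and the iterates
    (ε : ℝ) (hε : 0 < ε)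
    (proj : V → V)
    (hproj : ∀ y, proj y ∈ S ∧ ∀ z ∈ S, ‖y - proj y‖ ≤ ‖y - z‖)
    (x : ℕ → V) (δ : ℕ → EuclideanSpace ℝ (Fin n)) (d : ℕ → V)
    (hxS : ∀ k, 1 ≤ k → x k ∈ S) (hδΔ : ∀ k, 1 ≤ k → δ k ∈ Δ)
    (hstep : ∀ k, 1 ≤ k →
      (g (x k) (δ k) ≤ ε →
        d k ∈ subdiff f (x k) ∧ d k ≠ 0 ∧
          x (k + 1) = proj (x k - (ε / ‖d k‖ ^ 2) • d k)) ∧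
      (ε < g (x k) (δ k) →
        d k ∈ subdiff (fun z => g z (δ k)) (x k) ∧ d k ≠ 0 ∧
          x (k + 1) = proj (x k - (g (x k) (δ k) / ‖d k‖ ^ 2) • d k)))
    -- the number of iterations
    (N : ℕ) (hN1 : 1 ≤ N)
    (hN : (N : ℝ) ≥ L ^ 2 * Metric.infDist (x 1) Sstar ^ 2 / ε ^ 2) :
    (∃ k ∈ Finset.Icc 1 N, g (x k) (δ k) ≤ ε) ∧
      ∀ kstar ∈ Finset.Icc 1 N, g (x kstar) (δ kstar) ≤ ε →
        (∀ k ∈ Finset.Icc 1 N, g (x k) (δ k) ≤ ε → f (x kstar) ≤ f (x k)) →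
        f (x kstar) ≤ fstar + ε ∧
          G (x kstar) ≤ ε + (G (x kstar) - g (x kstar) (δ kstar)) :=
  stmt0_general S hScv Δ hΔcp f Lf hLf g Lg hLg hgcont G hG L hL Sstar hSstar hSstarne fstar hfstar
    ε hε proj hproj x δ d hxS hδΔ hstep N hN1 hN
end

section
/- Let V be a finite-dimensional real inner product space, S ⊆ V a nonempty closed convex set, f : V → ℝ a convex function, and let x ∈ S, x* ∈ S, ε > 0, L > 0, and d ∈ ∂f(x) with d ≠ 0 and ‖d‖ ≤ L. If f(x) > f(x*) + ε, then ‖P_S(x − (ε/‖d‖²) d) − x*‖² < ‖x − x*‖² − ε²/L². -/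
open RealInnerProductSpace

section

variable {V : Type*} [NormedAddCommGroup V] [InnerProductSpace ℝ V]

theorem lt_inner_sub_of_mem_subdiff {f : V → ℝ} {x z d : V} {ε : ℝ} (hd : d ∈ subdiff f x)
    (hfx : f z + ε < f x) : ε < ⟪d, x - z⟫ := by
  have hsub := hd z
  rw [← neg_sub, inner_neg_right] at hsub
  linarith

theorem real_inner_sub_le_zero_of_forall_norm_sub_le {S : Set V} (hS : Convex ℝ S) {y p : V}
    (hp : p ∈ S) (hmin : ∀ z ∈ S, ‖y - p‖ ≤ ‖y - z‖) {z : V} (hz : z ∈ S) :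
    ⟪y - p, z - p⟫ ≤ 0 := by
  have : Nonempty S := ⟨⟨p, hp⟩⟩
  have hinf : ‖y - p‖ = ⨅ w : S, ‖y - w‖ :=
    le_antisymm (le_ciInf fun w => hmin w w.2)
      (ciInf_le ⟨0, Set.forall_mem_range.2 fun w : S => norm_nonneg (y - w)⟩ ⟨p, hp⟩)
  exact (norm_eq_iInf_iff_real_inner_le_zero hS hp).1 hinf z hz

theorem norm_sub_sq_le_of_forall_norm_sub_le {S : Set V} (hS : Convex ℝ S) {y p : V}
    (hp : p ∈ S) (hmin : ∀ z ∈ S, ‖y - p‖ ≤ ‖y - z‖) {z : V} (hz : z ∈ S) :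
    ‖p - z‖ ^ 2 ≤ ‖y - z‖ ^ 2 := by
  have hvi := real_inner_sub_le_zero_of_forall_norm_sub_le hS hp hmin hz
  have hexp : ‖y - z‖ ^ 2 = ‖y - p‖ ^ 2 + 2 * ⟪y - p, p - z⟫ + ‖p - z‖ ^ 2 := by
    rw [← norm_add_sq_real, sub_add_sub_cancel]
  have hflip : ⟪y - p, p - z⟫ = -⟪y - p, z - p⟫ := by rw [← inner_neg_right, neg_sub]
  nlinarith [sq_nonneg ‖y - p‖]

theorem norm_sub_smul_sub_sq (x z d : V) (t : ℝ) :
    ‖x - t • d - z‖ ^ 2 = ‖x - z‖ ^ 2 - 2 * t * ⟪d, x - z⟫ + t ^ 2 * ‖d‖ ^ 2 := by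
  rw [sub_right_comm, norm_sub_sq_real, real_inner_smul_right, real_inner_comm, norm_smul,
    Real.norm_eq_abs, mul_pow, sq_abs]
  ring

theorem norm_sub_subgradient_step_sq_lt {x z d : V} {ε : ℝ} (hε : 0 < ε) (hd0 : d ≠ 0)
    (hεd : ε < ⟪d, x - z⟫) :
    ‖x - (ε / ‖d‖ ^ 2) • d - z‖ ^ 2 < ‖x - z‖ ^ 2 - ε ^ 2 / ‖d‖ ^ 2 := by
  have hd2 : 0 < ‖d‖ ^ 2 := by positivity
  have hexp : ‖x - (ε / ‖d‖ ^ 2) • d - z‖ ^ 2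
      = ‖x - z‖ ^ 2 - ε ^ 2 / ‖d‖ ^ 2 - 2 * (ε / ‖d‖ ^ 2) * (⟪d, x - z⟫ - ε) := by
    rw [norm_sub_smul_sub_sq]
    field_simp
    ring
  have hgain : 0 < 2 * (ε / ‖d‖ ^ 2) * (⟪d, x - z⟫ - ε) := by
    have := sub_pos.mpr hεd
    positivity
  linarith

end

theorem stmt2_general {V : Type*} [NormedAddCommGroup V] [InnerProductSpace ℝ V]
    (S : Set V) (hScv : Convex ℝ S)
    (f : V → ℝ)
    (x xstar : V) (hxstar : xstar ∈ S)
    (ε L : ℝ) (hε : 0 < ε)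
    (d : V) (hd : d ∈ subdiff f x) (hd0 : d ≠ 0) (hdL : ‖d‖ ≤ L)
    (proj : V → V)
    (hproj : ∀ y, proj y ∈ S ∧ ∀ z ∈ S, ‖y - proj y‖ ≤ ‖y - z‖)
    (hfx : f x > f xstar + ε) :
    ‖proj (x - (ε / ‖d‖ ^ 2) • d) - xstar‖ ^ 2 < ‖x - xstar‖ ^ 2 - ε ^ 2 / L ^ 2 := by
  have hεd : ε < ⟪d, x - xstar⟫ := lt_inner_sub_of_mem_subdiff hd hfx
  have hLd : ε ^ 2 / L ^ 2 ≤ ε ^ 2 / ‖d‖ ^ 2 := by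
    have : 0 < ‖d‖ := norm_pos_iff.mpr hd0
    gcongr
  calc ‖proj (x - (ε / ‖d‖ ^ 2) • d) - xstar‖ ^ 2
      ≤ ‖x - (ε / ‖d‖ ^ 2) • d - xstar‖ ^ 2 :=
        norm_sub_sq_le_of_forall_norm_sub_le hScv (hproj _).1 (hproj _).2 hxstar
    _ < ‖x - xstar‖ ^ 2 - ε ^ 2 / ‖d‖ ^ 2 := norm_sub_subgradient_step_sq_lt hε hd0 hεd
    _ ≤ ‖x - xstar‖ ^ 2 - ε ^ 2 / L ^ 2 := by linarith

theorem stmt2 {V : Type*} [NormedAddCommGroup V] [InnerProductSpace ℝ V]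
    [FiniteDimensional ℝ V]
    (S : Set V) (hSne : S.Nonempty) (hScl : IsClosed S) (hScv : Convex ℝ S)
    (f : V → ℝ) (hf : ConvexOn ℝ Set.univ f)
    (x xstar : V) (hx : x ∈ S) (hxstar : xstar ∈ S)
    (ε L : ℝ) (hε : 0 < ε) (hL : 0 < L)
    (d : V) (hd : d ∈ subdiff f x) (hd0 : d ≠ 0) (hdL : ‖d‖ ≤ L)
    (proj : V → V)
    (hproj : ∀ y, proj y ∈ S ∧ ∀ z ∈ S, ‖y - proj y‖ ≤ ‖y - z‖)
    (hfx : f x > f xstar + ε) :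
    ‖proj (x - (ε / ‖d‖ ^ 2) • d) - xstar‖ ^ 2 < ‖x - xstar‖ ^ 2 - ε ^ 2 / L ^ 2 :=
  stmt2_general S hScv f x xstar hxstar ε L hε d hd hd0 hdL proj hproj hfx
end

section
/- Let n ≥ 2 and let r ∈ (0, √2]. For every x ∈ Δ^{n-1}, the uniform distribution P on Δ^{n-1} satisfies P( B(x,r) ∩ Δ^{n-1} ) ≥ (r/√2)^{n-1}, where B(x,r) is the closed Euclidean ball of center x and radius r in ℝ^n. -/
/-!
The homothety of ratio `t = r / √2` centred at `x` maps the simplex into itself, by convexity,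
and into `B(x, r)`, since the simplex has diameter `√2`; it multiplies the `(n-1)`-dimensional
Hausdorff measure by `t ^ (n-1)`. Dividing by the measure of the simplex is legitimate because
that measure is positive and finite: dropping the last coordinate is a bi-Lipschitz bijection
from the simplex onto a region of `ℝ^(n-1)` with nonempty interior, where `μH[n-1]` is Lebesgue
measure.
-/

open MeasureTheory

/-- The standard simplex `Δ^{n-1}`, viewed inside Euclidean space (so that the metric,
and hence the Hausdorff measure, is the Euclidean one). -/
def stdSimplexE (n : ℕ) : Set (EuclideanSpace ℝ (Fin n)) :=
  {δ | (∀ i, 0 ≤ δ i) ∧ ∑ i, δ i = 1}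

open Metric Set AffineMap
open scoped ENNReal

section Convex

variable {E : Type*} [NormedAddCommGroup E] [NormedSpace ℝ E] {s : Set E} {x : E} {t D d : ℝ}

theorem Convex.image_homothety_subset (hs : Convex ℝ s) (hx : x ∈ s) (ht : t ∈ Icc 0 1) :
    homothety x t '' s ⊆ s := by
  rintro _ ⟨y, hy, rfl⟩
  rw [homothety_eq_lineMap]
  exact hs.lineMap_mem hx hy ht

theorem image_homothety_closedBall_subset (ht : 0 ≤ t) :
    homothety x t '' closedBall x D ⊆ closedBall x (t * D) := by
  rintro _ ⟨y, hy, rfl⟩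
  rw [mem_closedBall, dist_homothety_center, Real.norm_of_nonneg ht, dist_comm]
  exact mul_le_mul_of_nonneg_left hy ht

variable [MeasurableSpace E] [BorelSpace E]

theorem Convex.ofReal_rpow_mul_hausdorffMeasure_le (hs : Convex ℝ s) (hx : x ∈ s)
    (hsD : s ⊆ closedBall x D) (ht0 : 0 < t) (ht1 : t ≤ 1) (hd : 0 ≤ d) :
    ENNReal.ofReal t ^ d * μH[d] s ≤ μH[d] (closedBall x (t * D) ∩ s) := by
  have hsub : homothety x t '' s ⊆ closedBall x (t * D) ∩ s :=
    subset_inter ((image_mono hsD).trans (image_homothety_closedBall_subset ht0.le))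
      (hs.image_homothety_subset hx ⟨ht0.le, ht1⟩)
  calc ENNReal.ofReal t ^ d * μH[d] s = μH[d] (homothety x t '' s) := by
        rw [hausdorffMeasure_homothety_image hd x ht0.ne', ENNReal.smul_def, smul_eq_mul,
          ENNReal.coe_rpow_of_nonneg _ hd, ← Real.enorm_eq_ofReal ht0.le]
        rfl
    _ ≤ μH[d] (closedBall x (t * D) ∩ s) := measure_mono hsub

theorem Convex.ofReal_rpow_le_hausdorffMeasure_closedBall_inter_div (hs : Convex ℝ s)
    (hx : x ∈ s) (hsD : s ⊆ closedBall x D) (ht0 : 0 < t) (ht1 : t ≤ 1) (hd : 0 ≤ d)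
    (h0 : μH[d] s ≠ 0) (htop : μH[d] s ≠ ∞) :
    ENNReal.ofReal t ^ d ≤ μH[d] (closedBall x (t * D) ∩ s) / μH[d] s :=
  (ENNReal.le_div_iff_mul_le (.inl h0) (.inl htop)).2
    (hs.ofReal_rpow_mul_hausdorffMeasure_le hx hsD ht0 ht1 hd)

end Convex

theorem exists_eq_add_one_of_mem_stdSimplexE {n : ℕ} {x : EuclideanSpace ℝ (Fin n)}
    (hx : x ∈ stdSimplexE n) : ∃ m, n = m + 1 := by
  cases n with
  | zero => simpa using hx.2
  | succ m => exact ⟨m, rfl⟩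

theorem convex_stdSimplexE (n : ℕ) : Convex ℝ (stdSimplexE n) :=
  (convex_stdSimplex ℝ (Fin n)).linear_preimage (WithLp.linearEquiv 2 ℝ (Fin n → ℝ)).toLinearMap

theorem apply_le_one_of_mem_stdSimplexE {n : ℕ} {x : EuclideanSpace ℝ (Fin n)}
    (hx : x ∈ stdSimplexE n) (i : Fin n) : x i ≤ 1 :=
  hx.2 ▸ Finset.single_le_sum (fun j _ => hx.1 j) (Finset.mem_univ i)

theorem stdSimplexE_subset_closedBall {n : ℕ} {x : EuclideanSpace ℝ (Fin n)}
    (hx : x ∈ stdSimplexE n) : stdSimplexE n ⊆ closedBall x (Real.sqrt 2) := by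
  intro y hy
  rw [mem_closedBall, EuclideanSpace.dist_eq]
  refine Real.sqrt_le_sqrt ?_
  calc ∑ i, dist (y i) (x i) ^ 2 ≤ ∑ i, (y i + x i) := by
        refine Finset.sum_le_sum fun i _ => ?_
        rw [Real.dist_eq, sq_abs]
        nlinarith [hx.1 i, hy.1 i, apply_le_one_of_mem_stdSimplexE hx i,
          apply_le_one_of_mem_stdSimplexE hy i]
    _ = 2 := by rw [Finset.sum_add_distrib, hx.2, hy.2]; norm_num

noncomputable def simplexChart (m : ℕ) (y : Fin m → ℝ) : EuclideanSpace ℝ (Fin (m + 1)) :=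
  WithLp.toLp 2 (Fin.snoc y (1 - ∑ i, y i))

theorem lipschitzWith_snoc_one_sub_sum (m : ℕ) :
    LipschitzWith (m + 1) fun y : Fin m → ℝ => (Fin.snoc y (1 - ∑ i, y i) : Fin (m + 1) → ℝ) := by
  refine LipschitzWith.of_dist_le_mul fun y z => (dist_pi_le_iff (by positivity)).2 fun i => ?_
  push_cast
  refine Fin.lastCases ?_ (fun j => ?_) i
  · simp only [Fin.snoc_last, dist_sub_left]
    calc dist (∑ i, y i) (∑ i, z i) ≤ ∑ i, dist (y i) (z i) := dist_sum_sum_le _ _ _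
      _ ≤ ∑ _i : Fin m, dist y z := Finset.sum_le_sum fun i _ => dist_le_pi_dist y z i
      _ ≤ (m + 1) * dist y z := by
        rw [Finset.sum_const, Finset.card_univ, Fintype.card_fin, nsmul_eq_mul]
        exact mul_le_mul_of_nonneg_right (by linarith) dist_nonneg
  · simp only [Fin.snoc_castSucc]
    nlinarith [dist_le_pi_dist y z j, dist_nonneg (x := y) (y := z), (m.cast_nonneg : (0:ℝ) ≤ m)]

theorem exists_lipschitzWith_simplexChart (m : ℕ) : ∃ K, LipschitzWith K (simplexChart m) :=
  ⟨_, (PiLp.lipschitzWith_toLp 2 _).comp (lipschitzWith_snoc_one_sub_sum m)⟩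

theorem lipschitzWith_init_ofLp (m : ℕ) :
    LipschitzWith 1 fun z : EuclideanSpace ℝ (Fin (m + 1)) => Fin.init (WithLp.ofLp z) := by
  have hinit : LipschitzWith 1 fun q : Fin (m + 1) → ℝ => Fin.init q :=
    LipschitzWith.of_dist_le_mul fun p q => (dist_pi_le_iff (by positivity)).2 fun j => by
      simpa [Fin.init] using dist_le_pi_dist p q j.castSucc
  exact (hinit.comp (PiLp.lipschitzWith_ofLp 2 _)).weaken (mul_one 1).le

theorem simplexChart_mem_stdSimplexE {m : ℕ} {y : Fin m → ℝ} (h0 : ∀ j, 0 ≤ y j)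
    (h1 : ∑ j, y j ≤ 1) : simplexChart m y ∈ stdSimplexE (m + 1) := by
  refine ⟨fun i => ?_, by simp [simplexChart, Fin.sum_univ_castSucc]⟩
  refine Fin.lastCases ?_ (fun j => ?_) i
  · simpa [simplexChart] using h1
  · simpa [simplexChart] using h0 j

theorem stdSimplexE_subset_image_simplexChart (m : ℕ) :
    stdSimplexE (m + 1) ⊆ simplexChart m '' univ.pi fun _ => Icc 0 1 := by
  intro δ hδ
  refine ⟨Fin.init δ, fun j _ => ⟨hδ.1 _, apply_le_one_of_mem_stdSimplexE hδ _⟩, ?_⟩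
  have hlast : 1 - ∑ j, Fin.init δ j = δ (Fin.last m) := by
    rw [← hδ.2, Fin.sum_univ_castSucc]; simp [Fin.init]
  rw [simplexChart, hlast]
  exact congrArg (WithLp.toLp 2) (Fin.snoc_init_self δ.ofLp)

theorem pi_Icc_subset_image_init_stdSimplexE (m : ℕ) :
    (univ.pi fun _ : Fin m => Icc 0 (m + 1 : ℝ)⁻¹) ⊆
      (fun z : EuclideanSpace ℝ (Fin (m + 1)) => Fin.init (WithLp.ofLp z)) ''
        stdSimplexE (m + 1) := by
  intro y hy
  have h1 : ∑ j, y j ≤ 1 := calc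
    ∑ j, y j ≤ ∑ _j : Fin m, (m + 1 : ℝ)⁻¹ := Finset.sum_le_sum fun j _ => (hy j trivial).2
    _ ≤ 1 := by
      rw [Finset.sum_const, Finset.card_univ, Fintype.card_fin, nsmul_eq_mul, ← div_eq_mul_inv,
        div_le_one (by positivity)]
      linarith
  refine ⟨simplexChart m y, simplexChart_mem_stdSimplexE (fun j => (hy j trivial).1) h1, ?_⟩
  simp [simplexChart]

theorem hausdorffMeasure_pi_Icc (m : ℕ) (a : ℝ) :
    μH[m] (univ.pi fun _ : Fin m => Icc 0 a) = ENNReal.ofReal a ^ m := by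
  have hvol := hausdorffMeasure_pi_real (ι := Fin m)
  rw [Fintype.card_fin] at hvol
  rw [hvol, pi_univ_Icc, Real.volume_Icc_pi]
  simp

theorem hausdorffMeasure_stdSimplexE_pos (m : ℕ) : 0 < μH[m] (stdSimplexE (m + 1)) :=
  calc 0 < μH[m] (univ.pi fun _ : Fin m => Icc 0 (m + 1 : ℝ)⁻¹) := by
        rw [hausdorffMeasure_pi_Icc]
        exact ENNReal.pow_pos (ENNReal.ofReal_pos.2 (by positivity)) m
    _ ≤ _ := measure_mono (pi_Icc_subset_image_init_stdSimplexE m)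
    _ ≤ μH[m] (stdSimplexE (m + 1)) := by
        simpa using (lipschitzWith_init_ofLp m).hausdorffMeasure_image_le m.cast_nonneg _

theorem hausdorffMeasure_stdSimplexE_lt_top (m : ℕ) : μH[m] (stdSimplexE (m + 1)) < ∞ := by
  obtain ⟨K, hK⟩ := exists_lipschitzWith_simplexChart m
  calc μH[m] (stdSimplexE (m + 1)) ≤ μH[m] (simplexChart m '' univ.pi fun _ => Icc 0 1) :=
        measure_mono (stdSimplexE_subset_image_simplexChart m)
    _ ≤ K ^ (m : ℝ) * μH[m] (univ.pi fun _ : Fin m => Icc (0 : ℝ) 1) :=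
        hK.hausdorffMeasure_image_le m.cast_nonneg _
    _ < ∞ := by
        rw [hausdorffMeasure_pi_Icc]
        exact ENNReal.mul_lt_top (ENNReal.rpow_lt_top_of_nonneg m.cast_nonneg ENNReal.coe_ne_top)
          (by simp)

theorem stmt6_general {n : ℕ} (r : ℝ) (hr0 : 0 < r) (hr2 : r ≤ Real.sqrt 2)
    (x : EuclideanSpace ℝ (Fin n)) (hx : x ∈ stdSimplexE n) :
    ENNReal.ofReal ((r / Real.sqrt 2) ^ (n - 1)) ≤
      μH[(n : ℝ) - 1] (Metric.closedBall x r ∩ stdSimplexE n) /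
        μH[(n : ℝ) - 1] (stdSimplexE n) := by
  obtain ⟨m, rfl⟩ := exists_eq_add_one_of_mem_stdSimplexE hx
  have hsqrt2 : 0 < Real.sqrt 2 := by positivity
  have ht0 : 0 < r / Real.sqrt 2 := div_pos hr0 hsqrt2
  have ht1 : r / Real.sqrt 2 ≤ 1 := (div_le_one hsqrt2).2 hr2
  have key := (convex_stdSimplexE (m + 1)).ofReal_rpow_le_hausdorffMeasure_closedBall_inter_div
    hx (stdSimplexE_subset_closedBall hx) ht0 ht1 m.cast_nonneg
    (hausdorffMeasure_stdSimplexE_pos m).ne' (hausdorffMeasure_stdSimplexE_lt_top m).ne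
  rw [div_mul_cancel₀ r hsqrt2.ne', ENNReal.rpow_natCast, ← ENNReal.ofReal_pow ht0.le] at key
  simpa only [Nat.cast_add, Nat.cast_one, add_sub_cancel_right, Nat.add_sub_cancel] using key

theorem stmt6 {n : ℕ} (hn : 2 ≤ n) (r : ℝ) (hr0 : 0 < r) (hr2 : r ≤ Real.sqrt 2)
    (x : EuclideanSpace ℝ (Fin n)) (hx : x ∈ stdSimplexE n) :
    ENNReal.ofReal ((r / Real.sqrt 2) ^ (n - 1)) ≤
      μH[(n : ℝ) - 1] (Metric.closedBall x r ∩ stdSimplexE n) /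
        μH[(n : ℝ) - 1] (stdSimplexE n) :=
  stmt6_general r hr0 hr2 x hx
end

section
/- Let n and r be positive integers. For every δ ∈ Δ_r^{n-1}, the set G_r(δ) := B(δ, √2/r) ∩ Δ_r^{n-1} has cardinality at least n. Moreover, |G_r(e_i)| = n for every standard basis vector e_i, i = 1,…,n. -/
/-!
From a grid point `δ`, pick a coordinate `j` with `δ j > 0` (so `δ j ≥ 1/r`) and move mass `1/r`
from `j` to each coordinate `i`: this gives `n` distinct grid points at distance at most `√2/r`
from `δ`. Conversely, if a grid point `δ ≠ e_i` lies within `√2/r` of `e_i`, pick `k ≠ i` with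
`δ k > 0` and let `u := e_i + (e_k - e_i)/r`. Both `δ - e_i` and `u - e_i` have squared norm at
most `2/r²`, while their inner product is `(δ k + 1 - δ i)/r ≥ 2/r²`; hence `δ = u`.
-/

/-- The regular grid `Δ_r^{n-1}` of the standard simplex: points of the simplex all of whose
coordinates become nonnegative integers after multiplication by `r`. -/
def regGrid (n r : ℕ) : Set (EuclideanSpace ℝ (Fin n)) :=
  {δ | (∀ i, 0 ≤ δ i) ∧ (∑ i, δ i) = 1 ∧ ∀ i, ∃ m : ℕ, (r : ℝ) * δ i = m}

open EuclideanSpace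

lemma norm_single_one_sub_single_one_le {ι : Type*} [Fintype ι] [DecidableEq ι] (i j : ι) :
    ‖single i (1 : ℝ) - single j 1‖ ≤ Real.sqrt 2 := by
  have hinner : 0 ≤ inner ℝ (single i (1 : ℝ)) (single j 1) := by
    rw [inner_single_left, PiLp.single_apply]
    split_ifs <;> norm_num
  apply Real.le_sqrt_of_sq_le
  rw [norm_sub_sq_real, PiLp.norm_single, PiLp.norm_single, norm_one]
  linarith

lemma eq_of_norm_sq_le_of_le_inner {F : Type*} [NormedAddCommGroup F] [InnerProductSpace ℝ F]
    {x y : F} {c : ℝ} (hx : ‖x‖ ^ 2 ≤ c) (hy : ‖y‖ ^ 2 ≤ c) (hxy : c ≤ inner ℝ x y) : x = y := by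
  have h : ‖x - y‖ ^ 2 ≤ 0 := by rw [norm_sub_sq_real]; linarith
  rw [← sub_eq_zero, ← norm_eq_zero]
  exact pow_eq_zero_iff two_ne_zero |>.mp (le_antisymm h (sq_nonneg _))

lemma mem_regGrid_iff_int {n r : ℕ} {δ : EuclideanSpace ℝ (Fin n)} :
    δ ∈ regGrid n r ↔ (∀ i, 0 ≤ δ i) ∧ (∑ i, δ i) = 1 ∧ ∀ i, ∃ z : ℤ, (r : ℝ) * δ i = z := by
  refine and_congr_right fun hpos => and_congr_right fun _ => forall_congr' fun i => ?_
  refine ⟨fun ⟨m, hm⟩ => ⟨m, by exact_mod_cast hm⟩, fun ⟨z, hz⟩ => ?_⟩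
  have hz0 : (0 : ℝ) ≤ z := hz ▸ mul_nonneg (Nat.cast_nonneg r) (hpos i)
  replace hz0 : 0 ≤ z := by exact_mod_cast hz0
  lift z to ℕ using hz0
  exact ⟨z, by exact_mod_cast hz⟩

lemma inv_le_of_mem_regGrid {n r : ℕ} {δ : EuclideanSpace ℝ (Fin n)} (hδ : δ ∈ regGrid n r)
    {j : Fin n} (hj : 0 < δ j) : (r : ℝ)⁻¹ ≤ δ j := by
  rcases r.eq_zero_or_pos with rfl | hr
  · simpa using hj.le
  obtain ⟨m, hm⟩ := hδ.2.2 j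
  have hm0 : (0 : ℝ) < m := hm ▸ mul_pos (Nat.cast_pos.mpr hr) hj
  rw [inv_le_iff_one_le_mul₀' (Nat.cast_pos.mpr hr), hm, Nat.one_le_cast]
  exact_mod_cast hm0

lemma single_one_mem_regGrid {n r : ℕ} (i : Fin n) : single i (1 : ℝ) ∈ regGrid n r := by
  refine ⟨fun k => ?_, ?_, fun k => ⟨if k = i then r else 0, ?_⟩⟩
  · rw [PiLp.single_apply]; split_ifs <;> norm_num
  · simp [PiLp.single_apply]
  · rw [PiLp.single_apply]; split_ifs <;> simp

lemma eq_single_of_mem_regGrid {n r : ℕ} {δ : EuclideanSpace ℝ (Fin n)} (hδ : δ ∈ regGrid n r)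
    {i : Fin n} (h : ∀ k ≠ i, δ k ≤ 0) : δ = single i 1 := by
  obtain ⟨hpos, hsum, -⟩ := hδ
  have hzero : ∀ k ≠ i, δ k = 0 := fun k hk => le_antisymm (h k hk) (hpos k)
  have hi : δ i = 1 := by
    rwa [Finset.sum_eq_single i (fun k _ hk => hzero k hk) (by simp)] at hsum
  ext k
  rw [PiLp.single_apply]
  split_ifs with hk
  · rwa [hk]
  · exact hzero k hk

lemma regGrid_finite (n : ℕ) {r : ℕ} (hr : r ≠ 0) : (regGrid n r).Finite := by
  refine (Set.finite_range fun m : Fin n → Fin (r + 1) =>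
    (WithLp.toLp 2 fun k => (m k : ℝ) / r : EuclideanSpace ℝ (Fin n))).subset ?_
  rintro δ ⟨hpos, hsum, hint⟩
  choose m hm using hint
  have hle : ∀ k, m k < r + 1 := fun k => by
    have hδk : δ k ≤ 1 := hsum ▸ Finset.single_le_sum (fun i _ => hpos i) (Finset.mem_univ k)
    have : (m k : ℝ) ≤ r := hm k ▸ mul_le_of_le_one_right (Nat.cast_nonneg r) hδk
    exact Nat.lt_succ_of_le (by exact_mod_cast this)
  refine ⟨fun k => ⟨m k, hle k⟩, PiLp.ext fun k => ?_⟩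
  simp [← hm k, hr]

noncomputable def moveMass (r : ℕ) {n : ℕ} (δ : EuclideanSpace ℝ (Fin n)) (j i : Fin n) :
    EuclideanSpace ℝ (Fin n) :=
  δ + (r : ℝ)⁻¹ • (single i 1 - single j 1)

lemma moveMass_apply (r : ℕ) {n : ℕ} (δ : EuclideanSpace ℝ (Fin n)) (j i k : Fin n) :
    moveMass r δ j i k = δ k + (r : ℝ)⁻¹ * ((if k = i then 1 else 0) - if k = j then 1 else 0) := by
  simp [moveMass, PiLp.single_apply]

lemma moveMass_self (r : ℕ) {n : ℕ} (δ : EuclideanSpace ℝ (Fin n)) (i : Fin n) :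
    moveMass r δ i i = δ := by
  simp [moveMass]

lemma dist_moveMass_le (r : ℕ) {n : ℕ} (δ : EuclideanSpace ℝ (Fin n)) (j i : Fin n) :
    dist (moveMass r δ j i) δ ≤ Real.sqrt 2 / r := by
  rw [moveMass, dist_self_add_left, norm_smul, Real.norm_of_nonneg (by positivity), inv_mul_eq_div]
  gcongr
  exact norm_single_one_sub_single_one_le i j

lemma moveMass_injective {r : ℕ} (hr : r ≠ 0) {n : ℕ} (δ : EuclideanSpace ℝ (Fin n)) (j : Fin n) :
    Function.Injective (moveMass r δ j) := by
  intro i i' h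
  have h' : single i (1 : ℝ) = single i' 1 := by
    simpa [moveMass, hr] using h
  exact orthonormal_single.linearIndependent.injective h'

lemma ncard_range_moveMass {r : ℕ} (hr : r ≠ 0) {n : ℕ} (δ : EuclideanSpace ℝ (Fin n))
    (j : Fin n) : (Set.range (moveMass r δ j)).ncard = n := by
  rw [Set.ncard_range_of_injective (moveMass_injective hr δ j), Nat.card_fin]

lemma moveMass_mem_regGrid {n r : ℕ} (hr : r ≠ 0) {δ : EuclideanSpace ℝ (Fin n)}
    (hδ : δ ∈ regGrid n r) {j : Fin n} (hj : 0 < δ j) (i : Fin n) :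
    moveMass r δ j i ∈ regGrid n r := by
  have hδj := inv_le_of_mem_regGrid hδ hj
  obtain ⟨hpos, hsum, hint⟩ := hδ
  refine mem_regGrid_iff_int.mpr ⟨fun k => ?_, ?_, fun k => ?_⟩
  · have hr₀ : (0 : ℝ) ≤ (r : ℝ)⁻¹ := by positivity
    rw [moveMass_apply]
    split_ifs <;> subst_vars <;> linarith [hpos k]
  · simp [moveMass_apply, Finset.sum_add_distrib, ← Finset.mul_sum, hsum]
  · obtain ⟨m, hm⟩ := hint k
    refine ⟨m + (if k = i then 1 else 0) - (if k = j then 1 else 0), ?_⟩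
    rw [moveMass_apply, mul_add, hm, ← mul_assoc, mul_inv_cancel₀ (Nat.cast_ne_zero.mpr hr)]
    push_cast
    ring

theorem le_ncard_closedBall_inter_regGrid {n r : ℕ} (hr : r ≠ 0) {δ : EuclideanSpace ℝ (Fin n)}
    (hδ : δ ∈ regGrid n r) : n ≤ (Metric.closedBall δ (Real.sqrt 2 / r) ∩ regGrid n r).ncard := by
  obtain ⟨j, -, hj⟩ : ∃ j ∈ Finset.univ, (0 : ℝ) < δ j :=
    Finset.exists_lt_of_sum_lt (by simp [hδ.2.1])
  calc n = (Set.range (moveMass r δ j)).ncard := (ncard_range_moveMass hr δ j).symm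
    _ ≤ _ := by
      refine Set.ncard_le_ncard ?_ ((regGrid_finite n hr).subset Set.inter_subset_right)
      rintro _ ⟨i, rfl⟩
      exact ⟨dist_moveMass_le r δ j i, moveMass_mem_regGrid hr hδ hj i⟩

lemma moveMass_single_eq_of_mem_closedBall {n r : ℕ} {δ : EuclideanSpace ℝ (Fin n)}
    (hδ : δ ∈ regGrid n r) {i : Fin n} (hball : dist δ (single i 1) ≤ Real.sqrt 2 / r)
    {k : Fin n} (hki : k ≠ i) (hk : 0 < δ k) : moveMass r (single i 1) i k = δ := by
  have hδk := inv_le_of_mem_regGrid hδ hk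
  have hδik : δ i + δ k ≤ 1 :=
    hδ.2.1 ▸ Finset.add_le_sum (fun l _ => hδ.1 l) (Finset.mem_univ i) (Finset.mem_univ k) hki.symm
  have hinner : inner ℝ (moveMass r (single i 1) i k - single i 1) (δ - single i 1) =
      (r : ℝ)⁻¹ * (δ k - (δ i - 1)) := by
    rw [moveMass, add_sub_cancel_left, inner_smul_left, inner_sub_left, inner_single_left,
      inner_single_left]
    simp [hki]
  rw [← sub_left_inj (a := single i 1)]
  refine eq_of_norm_sq_le_of_le_inner (c := (Real.sqrt 2 / r) ^ 2) ?_ ?_ ?_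
  · rw [← dist_eq_norm]
    gcongr
    exact dist_moveMass_le r _ i k
  · rw [← dist_eq_norm]
    gcongr
  · calc (Real.sqrt 2 / r) ^ 2 = (r : ℝ)⁻¹ * ((r : ℝ)⁻¹ + (r : ℝ)⁻¹) := by
          rw [div_pow, Real.sq_sqrt zero_le_two]; ring
      _ ≤ _ := by rw [hinner]; gcongr; linarith

lemma closedBall_single_inter_regGrid_subset {n r : ℕ} (i : Fin n) :
    Metric.closedBall (single i (1 : ℝ)) (Real.sqrt 2 / r) ∩ regGrid n r ⊆
      Set.range (moveMass r (single i 1) i) := by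
  rintro δ ⟨hball, hδ⟩
  by_cases h : ∃ k ≠ i, 0 < δ k
  · obtain ⟨k, hki, hk⟩ := h
    exact ⟨k, moveMass_single_eq_of_mem_closedBall hδ hball hki hk⟩
  · push Not at h
    exact ⟨i, by rw [moveMass_self, eq_single_of_mem_regGrid hδ h]⟩

theorem stmt9_general {n r : ℕ} (hr : 0 < r) :
    (∀ δ ∈ regGrid n r,
      n ≤ (Metric.closedBall δ (Real.sqrt 2 / r) ∩ regGrid n r).ncard) ∧
    (∀ i : Fin n,
      (Metric.closedBall (EuclideanSpace.single i (1 : ℝ)) (Real.sqrt 2 / r) ∩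
        regGrid n r).ncard = n) := by
  refine ⟨fun δ hδ => le_ncard_closedBall_inter_regGrid hr.ne' hδ, fun i => le_antisymm ?_
    (le_ncard_closedBall_inter_regGrid hr.ne' (single_one_mem_regGrid i))⟩
  calc _ ≤ (Set.range (moveMass r (single i 1) i)).ncard :=
        Set.ncard_le_ncard (closedBall_single_inter_regGrid_subset i) (Set.finite_range _)
    _ = n := ncard_range_moveMass hr.ne' _ i

theorem stmt9 {n r : ℕ} (hn : 0 < n) (hr : 0 < r) :
    (∀ δ ∈ regGrid n r,
      n ≤ (Metric.closedBall δ (Real.sqrt 2 / r) ∩ regGrid n r).ncard) ∧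
    (∀ i : Fin n,
      (Metric.closedBall (EuclideanSpace.single i (1 : ℝ)) (Real.sqrt 2 / r) ∩
        regGrid n r).ncard = n) :=
  stmt9_general hr
end

section
/- Let C be a real symmetric n×n matrix with ‖C‖_F = 1, let S := {X symmetric n×n : ‖X‖_F ≤ 1}, and define g(X;δ) := −δ^T X δ for δ ∈ Δ^{n-1} and G(X) := max_{δ∈Δ^{n-1}} g(X;δ). Let f* denote the minimum of ⟨C, X⟩ over X ∈ COP^n with ‖X‖_F ≤ 1. Fix ε > 0 and α ≥ 0, and let (X_k) be a sequence of symmetric matrices in S with X_1 = O (the zero matrix) and a sequence (δ_k) in Δ^{n-1} such that for every k: G(X_k) − g(X_k;δ_k) ≤ αε, and if g(X_k;δ_k) ≤ ε then X_{k+1} = P_S(X_k − ε C), while otherwise X_{k+1} = P_S( X_k + (g(X_k;δ_k)/‖δ_k‖_2^4) δ_k δ_k^T ). Then for every positive integer N with N ≥ 1/ε², the set I_N := {k ∈ {1,…,N} : g(X_k;δ_k) ≤ ε} is nonempty, and for every k* ∈ I_N minimizing ⟨C, X_k⟩ over k ∈ I_N one has ⟨C, X_{k*}⟩ ≤ f*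 + ε and G(X_{k*}) ≤ (1+α)ε. -/
/-!
Fix a minimiser `W` of the copositive problem and track `‖X_k - W‖_F²`. As long as `X_k` is not both
`ε`-feasible and `ε`-optimal, every iteration decreases it by more than `ε²`. A productive step
moves by `ε` along `-C` with `⟨C, X_k - W⟩ > ε` and `‖C‖_F = 1`. An unproductive step is a Polyak
step along `δδᵀ`, which separates `X_k` from `W` because, by copositivity of `W`,
`⟨δδᵀ, X_k - W⟩ = -g(X_k; δ) - δᵀWδ ≤ -g(X_k; δ) < -ε`. The projection onto the ball keeps the
gain, as `W` lies in the ball. Since `‖X_1 - W‖_F² ≤ 1 ≤ Nε²`, this cannot go on for all `N`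
iterations.
-/

open Matrix

/-- The trace inner product `⟨A, B⟩ = ∑_{i,j} A_{ij} B_{ij}` on real matrices. -/
def frobIP {n : ℕ} (A B : Matrix (Fin n) (Fin n) ℝ) : ℝ := ∑ i, ∑ j, A i j * B i j

/-- The Frobenius norm. -/
noncomputable def frobNorm {n : ℕ} (A : Matrix (Fin n) (Fin n) ℝ) : ℝ :=
  Real.sqrt (frobIP A A)

/-- The metric projection onto the closed unit Frobenius ball. -/
noncomputable def projFrobBall {n : ℕ} (X : Matrix (Fin n) (Fin n) ℝ) :
    Matrix (Fin n) (Fin n) ℝ :=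
  if frobNorm X ≤ 1 then X else (frobNorm X)⁻¹ • X

open RealInnerProductSpace

section InnerProductSpace

variable {E : Type*} [NormedAddCommGroup E] [InnerProductSpace ℝ E]

noncomputable def unitBallRetraction (y : E) : E := if ‖y‖ ≤ 1 then y else ‖y‖⁻¹ • y

theorem norm_unitBallRetraction_sub_le {y w : E} (hw : ‖w‖ ≤ 1) :
    ‖unitBallRetraction y - w‖ ≤ ‖y - w‖ := by
  rw [unitBallRetraction]
  split_ifs with hy
  · exact le_rfl
  set a := ‖y‖
  have ha : 0 < a := one_pos.trans (not_le.1 hy)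
  have hyw : ⟪y, w⟫ ≤ a := (real_inner_le_norm y w).trans (by nlinarith [norm_nonneg w])
  rw [← pow_le_pow_iff_left₀ (norm_nonneg _) (norm_nonneg _) two_ne_zero, norm_sub_sq_real,
    norm_sub_sq_real, norm_smul, Real.norm_of_nonneg (inv_nonneg.2 ha.le),
    inv_mul_cancel₀ ha.ne', real_inner_smul_left]
  -- the difference of the two sides is `a² - 1 - 2 (1 - a⁻¹) ⟪y, w⟫ ≥ (a - 1)²`
  have : (a - 1) * ⟪y, w⟫ ≤ (a - 1) * a := mul_le_mul_of_nonneg_left hyw (by linarith)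
  have : a⁻¹ * a = 1 := inv_mul_cancel₀ ha.ne'
  nlinarith [sq_nonneg (a - 1)]

theorem norm_sub_smul_sub_sq_lt {x w v : E} {ε : ℝ} (hε : 0 < ε) (hv : ‖v‖ = 1)
    (hvxw : ε < ⟪v, x - w⟫) : ‖x - ε • v - w‖ ^ 2 < ‖x - w‖ ^ 2 - ε ^ 2 := by
  rw [show x - ε • v - w = (x - w) - ε • v by abel, norm_sub_sq_real, real_inner_smul_right,
    norm_smul, hv, real_inner_comm, Real.norm_of_nonneg hε.le]
  nlinarith

theorem norm_add_polyak_sub_sq_le {x w m : E} {γ : ℝ} (hm : m ≠ 0) (hγ : 0 ≤ γ)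
    (hmxw : ⟪m, x - w⟫ ≤ -γ) :
    ‖x + (γ / ‖m‖ ^ 2) • m - w‖ ^ 2 ≤ ‖x - w‖ ^ 2 - γ ^ 2 / ‖m‖ ^ 2 := by
  have hm2 : 0 < ‖m‖ ^ 2 := by positivity
  rw [show x + (γ / ‖m‖ ^ 2) • m - w = (x - w) + (γ / ‖m‖ ^ 2) • m by abel, norm_add_sq_real,
    real_inner_smul_right, norm_smul, real_inner_comm, Real.norm_of_nonneg (by positivity)]
  have : γ / ‖m‖ ^ 2 * ⟪m, x - w⟫ ≤ γ / ‖m‖ ^ 2 * -γ :=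
    mul_le_mul_of_nonneg_left hmxw (by positivity)
  field_simp
  field_simp at this
  nlinarith

end InnerProductSpace

theorem sum_sq_le_one_of_mem_stdSimplex {ι : Type*} [Fintype ι] {d : ι → ℝ}
    (hd : d ∈ stdSimplex ℝ ι) : ∑ i, d i ^ 2 ≤ 1 :=
  calc ∑ i, d i ^ 2 ≤ ∑ i, d i := Finset.sum_le_sum fun i _ => by
        have := mem_Icc_of_mem_stdSimplex hd i
        nlinarith [this.1, this.2]
    _ = 1 := hd.2

theorem sum_sq_pos_of_mem_stdSimplex {ι : Type*} [Fintype ι] {d : ι → ℝ}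
    (hd : d ∈ stdSimplex ℝ ι) : 0 < ∑ i, d i ^ 2 := by
  obtain ⟨i, -, hi⟩ := Finset.exists_ne_zero_of_sum_ne_zero (hd.2.trans_ne one_ne_zero)
  exact Finset.sum_pos' (fun j _ => sq_nonneg _) ⟨i, Finset.mem_univ _, by positivity⟩

theorem exists_mem_Icc_of_descent {D : ℕ → ℝ} {P : ℕ → Prop} {c : ℝ} {N : ℕ} (hN : 0 < N)
    (hD : ∀ k, 0 ≤ D k) (hD1 : D 1 ≤ N * c)
    (hdesc : ∀ k ∈ Finset.Icc 1 N, ¬ P k → D (k + 1) < D k - c) :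
    ∃ k ∈ Finset.Icc 1 N, P k := by
  by_contra! hnone
  have hsum : ∑ _k ∈ Finset.range N, c < ∑ k ∈ Finset.range N, (D (k + 1) - D (k + 1 + 1)) :=
    Finset.sum_lt_sum_of_nonempty (Finset.nonempty_range_iff.2 hN.ne') fun k hk => by
      have hk' : k + 1 ∈ Finset.Icc 1 N := Finset.mem_Icc.2 ⟨by omega, Finset.mem_range.1 hk⟩
      linarith [hdesc _ hk' (hnone _ hk')]
  rw [Finset.sum_range_sub' (fun k => D (k + 1)), Finset.sum_const, Finset.card_range,
    nsmul_eq_mul] at hsum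
  linarith [hD (N + 1)]

section Frobenius

variable {n : ℕ}

def frobVec (A : Matrix (Fin n) (Fin n) ℝ) : EuclideanSpace ℝ (Fin n × Fin n) :=
  WithLp.toLp 2 fun p => A p.1 p.2

@[simp] lemma frobVec_zero : frobVec (0 : Matrix (Fin n) (Fin n) ℝ) = 0 := rfl

@[simp] lemma frobVec_add (A B : Matrix (Fin n) (Fin n) ℝ) :
    frobVec (A + B) = frobVec A + frobVec B := rfl

@[simp] lemma frobVec_sub (A B : Matrix (Fin n) (Fin n) ℝ) :
    frobVec (A - B) = frobVec A - frobVec B := rfl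

@[simp] lemma frobVec_smul (c : ℝ) (A : Matrix (Fin n) (Fin n) ℝ) :
    frobVec (c • A) = c • frobVec A := rfl

theorem frobIP_eq_inner (A B : Matrix (Fin n) (Fin n) ℝ) :
    frobIP A B = ⟪frobVec A, frobVec B⟫ := by
  simp [frobIP, frobVec, PiLp.inner_apply, Fintype.sum_prod_type, mul_comm]

theorem frobNorm_eq_norm (A : Matrix (Fin n) (Fin n) ℝ) : frobNorm A = ‖frobVec A‖ := by
  rw [frobNorm, frobIP_eq_inner, real_inner_self_eq_norm_sq, Real.sqrt_sq (norm_nonneg _)]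

theorem frobIP_vecMulVec_self (A : Matrix (Fin n) (Fin n) ℝ) (d : Fin n → ℝ) :
    frobIP A (vecMulVec d d) = d ⬝ᵥ A *ᵥ d := by
  simp only [frobIP, vecMulVec_apply, dotProduct, mulVec, Finset.mul_sum]
  exact Finset.sum_congr rfl fun i _ => Finset.sum_congr rfl fun j _ => by ring

theorem frobNorm_vecMulVec_self (d : Fin n → ℝ) : frobNorm (vecMulVec d d) = ∑ i, d i ^ 2 := by
  have hs : d ⬝ᵥ d = ∑ i, d i ^ 2 := by simp only [dotProduct, sq]
  rw [frobNorm, frobIP_vecMulVec_self, vecMulVec_mulVec, op_smul_eq_smul, dotProduct_smul,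
    smul_eq_mul, hs, Real.sqrt_mul_self (by positivity)]

theorem frobVec_projFrobBall (Y : Matrix (Fin n) (Fin n) ℝ) :
    frobVec (projFrobBall Y) = unitBallRetraction (frobVec Y) := by
  rw [projFrobBall, unitBallRetraction, frobNorm_eq_norm]
  split_ifs <;> rfl

theorem frobNorm_projFrobBall_sub_le {W : Matrix (Fin n) (Fin n) ℝ} (hW : frobNorm W ≤ 1)
    (Y : Matrix (Fin n) (Fin n) ℝ) : frobNorm (projFrobBall Y - W) ≤ frobNorm (Y - W) := by
  rw [frobNorm_eq_norm] at hW
  simpa only [frobNorm_eq_norm, frobVec_sub, frobVec_projFrobBall] using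
    norm_unitBallRetraction_sub_le hW

theorem frobNorm_projFrobBall_sub_sq_le {W : Matrix (Fin n) (Fin n) ℝ} (hW : frobNorm W ≤ 1)
    (Y : Matrix (Fin n) (Fin n) ℝ) : frobNorm (projFrobBall Y - W) ^ 2 ≤ frobNorm (Y - W) ^ 2 :=
  pow_le_pow_left₀ (Real.sqrt_nonneg _) (frobNorm_projFrobBall_sub_le hW Y) 2

theorem frobNorm_projFrobBall_sub_smul_sub_sq_lt {C W X : Matrix (Fin n) (Fin n) ℝ} {ε : ℝ}
    (hε : 0 < ε) (hC : frobNorm C = 1) (hW : frobNorm W ≤ 1)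
    (hCX : frobIP C W + ε < frobIP C X) :
    frobNorm (projFrobBall (X - ε • C) - W) ^ 2 < frobNorm (X - W) ^ 2 - ε ^ 2 := by
  refine (frobNorm_projFrobBall_sub_sq_le hW _).trans_lt ?_
  rw [frobNorm_eq_norm] at hC
  rw [frobIP_eq_inner, frobIP_eq_inner] at hCX
  simp only [frobNorm_eq_norm, frobVec_sub, frobVec_smul]
  exact norm_sub_smul_sub_sq_lt hε hC (by rw [inner_sub_right]; linarith)

theorem frobNorm_projFrobBall_add_polyak_sub_sq_lt {W X : Matrix (Fin n) (Fin n) ℝ}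
    {d : Fin n → ℝ} {ε : ℝ} (hε : 0 < ε) (hd : d ∈ stdSimplex ℝ (Fin n))
    (hW : frobNorm W ≤ 1) (hWd : 0 ≤ d ⬝ᵥ W *ᵥ d) (hXd : ε < -(d ⬝ᵥ X *ᵥ d)) :
    frobNorm (projFrobBall (X + (-(d ⬝ᵥ X *ᵥ d) / Real.sqrt (∑ i, d i ^ 2) ^ 4) •
      vecMulVec d d) - W) ^ 2 < frobNorm (X - W) ^ 2 - ε ^ 2 := by
  refine (frobNorm_projFrobBall_sub_sq_le hW _).trans_lt ?_
  set γ := -(d ⬝ᵥ X *ᵥ d)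
  set s := ∑ i, d i ^ 2
  have hs0 : 0 < s := sum_sq_pos_of_mem_stdSimplex hd
  have hm : ‖frobVec (vecMulVec d d)‖ = s := by rw [← frobNorm_eq_norm, frobNorm_vecMulVec_self]
  have hsqrt : Real.sqrt s ^ 4 = ‖frobVec (vecMulVec d d)‖ ^ 2 := by
    rw [hm, show 4 = 2 * 2 from rfl, pow_mul, Real.sq_sqrt hs0.le]
  have hsep : ⟪frobVec (vecMulVec d d), frobVec X - frobVec W⟫ ≤ -γ := by
    rw [real_inner_comm, ← frobVec_sub, ← frobIP_eq_inner, frobIP_vecMulVec_self, sub_mulVec,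
      dotProduct_sub]
    linarith
  have hpolyak := norm_add_polyak_sub_sq_le (norm_pos_iff.1 (hm ▸ hs0)) (hε.trans hXd).le hsep
  -- since `‖δδᵀ‖_F = ‖δ‖² ≤ 1`, the Polyak step gains at least `γ² > ε²`
  have hgain : γ ^ 2 ≤ γ ^ 2 / s ^ 2 :=
    le_div_self (sq_nonneg γ) (by positivity)
      (pow_le_one₀ hs0.le (sum_sq_le_one_of_mem_stdSimplex hd))
  simp only [frobNorm_eq_norm, frobVec_sub, frobVec_add, frobVec_smul, hsqrt]
  rw [hm] at hpolyak ⊢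
  nlinarith

end Frobenius

theorem stmt14_general {n : ℕ}
    (C : Matrix (Fin n) (Fin n) ℝ) (hCnorm : frobNorm C = 1)
    (g : Matrix (Fin n) (Fin n) ℝ → (Fin n → ℝ) → ℝ)
    (hg : ∀ X δ, g X δ = -(δ ⬝ᵥ X.mulVec δ))
    (G : Matrix (Fin n) (Fin n) ℝ → ℝ)
    -- the optimal value f* of min ⟨C, X⟩ over copositive X in the unit Frobenius ball
    (fstar : ℝ)
    (hfstar : IsLeast {v : ℝ | ∃ X : Matrix (Fin n) (Fin n) ℝ, X.IsSymm ∧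
        (∀ x : Fin n → ℝ, (∀ i, 0 ≤ x i) → 0 ≤ x ⬝ᵥ X.mulVec x) ∧
        frobNorm X ≤ 1 ∧ v = frobIP C X} fstar)
    (ε α : ℝ) (hε : 0 < ε)
    -- the iterates
    (X : ℕ → Matrix (Fin n) (Fin n) ℝ) (δ : ℕ → Fin n → ℝ)
    (hX1 : X 1 = 0)
    (hδ : ∀ k, 1 ≤ k → δ k ∈ stdSimplex ℝ (Fin n))
    (hξ : ∀ k, 1 ≤ k → G (X k) - g (X k) (δ k) ≤ α * ε)
    (hstep : ∀ k, 1 ≤ k →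
      (g (X k) (δ k) ≤ ε → X (k + 1) = projFrobBall (X k - ε • C)) ∧
      (ε < g (X k) (δ k) → X (k + 1) = projFrobBall
        (X k + (g (X k) (δ k) / Real.sqrt (∑ i, δ k i ^ 2) ^ 4) •
          Matrix.vecMulVec (δ k) (δ k))))
    -- the number of iterations
    (N : ℕ) (hN1 : 1 ≤ N) (hN : (N : ℝ) ≥ 1 / ε ^ 2) :
    (∃ k ∈ Finset.Icc 1 N, g (X k) (δ k) ≤ ε) ∧
      ∀ kstar ∈ Finset.Icc 1 N, g (X kstar) (δ kstar) ≤ ε →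
        (∀ k ∈ Finset.Icc 1 N, g (X k) (δ k) ≤ ε → frobIP C (X kstar) ≤ frobIP C (X k)) →
        frobIP C (X kstar) ≤ fstar + ε ∧ G (X kstar) ≤ (1 + α) * ε := by
  obtain ⟨W, -, hWcop, hW, rfl⟩ := hfstar.1
  have hdesc : ∀ k ∈ Finset.Icc 1 N, ¬ (g (X k) (δ k) ≤ ε ∧ frobIP C (X k) ≤ frobIP C W + ε) →
      frobNorm (X (k + 1) - W) ^ 2 < frobNorm (X k - W) ^ 2 - ε ^ 2 := by
    intro k hk hbad
    have hk1 := (Finset.mem_Icc.1 hk).1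
    by_cases hgood : g (X k) (δ k) ≤ ε
    · rw [(hstep k hk1).1 hgood]
      exact frobNorm_projFrobBall_sub_smul_sub_sq_lt hε hCnorm hW
        (by linarith [not_le.1 (not_and.1 hbad hgood)])
    · have hbig := not_le.1 hgood
      rw [(hstep k hk1).2 hbig, hg]
      rw [hg] at hbig
      exact frobNorm_projFrobBall_add_polyak_sub_sq_lt hε (hδ k hk1) hW (hWcop _ (hδ k hk1).1) hbig
  have hX1W : frobNorm (X 1 - W) ^ 2 ≤ N * ε ^ 2 := by
    rw [ge_iff_le, div_le_iff₀ (by positivity)] at hN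
    rw [hX1, frobNorm_eq_norm, frobVec_sub, frobVec_zero, zero_sub, norm_neg, ← frobNorm_eq_norm]
    exact (pow_le_one₀ (Real.sqrt_nonneg _) hW).trans hN
  obtain ⟨k, hk, hkg, hkC⟩ :=
    exists_mem_Icc_of_descent (D := fun k => frobNorm (X k - W) ^ 2) hN1 (fun k => sq_nonneg _)
      hX1W hdesc
  refine ⟨⟨k, hk, hkg⟩, fun kstar hkstar hgstar hmin => ⟨(hmin k hk hkg).trans hkC, ?_⟩⟩
  linarith [hξ kstar (Finset.mem_Icc.1 hkstar).1]

theorem stmt14 {n : ℕ} (hn : 0 < n)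
    (C : Matrix (Fin n) (Fin n) ℝ) (hCsymm : C.IsSymm) (hCnorm : frobNorm C = 1)
    (g : Matrix (Fin n) (Fin n) ℝ → (Fin n → ℝ) → ℝ)
    (hg : ∀ X δ, g X δ = -(δ ⬝ᵥ X.mulVec δ))
    (G : Matrix (Fin n) (Fin n) ℝ → ℝ)
    (hG : ∀ X, G X = sSup (g X '' stdSimplex ℝ (Fin n)))
    -- the optimal value f* of min ⟨C, X⟩ over copositive X in the unit Frobenius ball
    (fstar : ℝ)
    (hfstar : IsLeast {v : ℝ | ∃ X : Matrix (Fin n) (Fin n) ℝ, X.IsSymm ∧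
        (∀ x : Fin n → ℝ, (∀ i, 0 ≤ x i) → 0 ≤ x ⬝ᵥ X.mulVec x) ∧
        frobNorm X ≤ 1 ∧ v = frobIP C X} fstar)
    (ε α : ℝ) (hε : 0 < ε) (hα : 0 ≤ α)
    -- the iterates
    (X : ℕ → Matrix (Fin n) (Fin n) ℝ) (δ : ℕ → Fin n → ℝ)
    (hXsymm : ∀ k, 1 ≤ k → (X k).IsSymm)
    (hXS : ∀ k, 1 ≤ k → frobNorm (X k) ≤ 1)
    (hX1 : X 1 = 0)
    (hδ : ∀ k, 1 ≤ k → δ k ∈ stdSimplex ℝ (Fin n))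
    (hξ : ∀ k, 1 ≤ k → G (X k) - g (X k) (δ k) ≤ α * ε)
    (hstep : ∀ k, 1 ≤ k →
      (g (X k) (δ k) ≤ ε → X (k + 1) = projFrobBall (X k - ε • C)) ∧
      (ε < g (X k) (δ k) → X (k + 1) = projFrobBall
        (X k + (g (X k) (δ k) / Real.sqrt (∑ i, δ k i ^ 2) ^ 4) •
          Matrix.vecMulVec (δ k) (δ k))))
    -- the number of iterations
    (N : ℕ) (hN1 : 1 ≤ N) (hN : (N : ℝ) ≥ 1 / ε ^ 2) :
    (∃ k ∈ Finset.Icc 1 N, g (X k) (δ k) ≤ ε) ∧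
      ∀ kstar ∈ Finset.Icc 1 N, g (X kstar) (δ kstar) ≤ ε →
        (∀ k ∈ Finset.Icc 1 N, g (X k) (δ k) ≤ ε → frobIP C (X kstar) ≤ frobIP C (X k)) →
        frobIP C (X kstar) ≤ fstar + ε ∧ G (X kstar) ≤ (1 + α) * ε :=
  stmt14_general C hCnorm g hg G fstar hfstar ε α hε X δ hX1 hδ hξ hstep N hN1 hN
end

section
/- Let C be a real symmetric n×n matrix with ‖C‖_F = 1, let S := {X symmetric n×n : ‖X‖_F ≤ 1}, and define g(X;δ) := −δ^T X δ for δ ∈ Δ^{n-1} and G(X) := max_{δ∈Δ^{n-1}} g(X;δ). Fix ε > 0 and α ≥ 0, and let (X_k) be a sequence of symmetric matrices in S with X_1 = O (the zero matrix) and a sequence (δ_k) in Δ^{n-1} such that for every k: G(X_k) − g(X_k;δ_k) ≤ αε, and if g(X_k;δ_k) ≤ ε then X_{k+1} = P_S(X_k − ε C), while otherwise X_{k+1} = P_S( X_k + (g(X_k;δ_k)/‖δ_k‖_2^4) δ_k δ_k^T ). Let N be a positive integer with N ≥ 1/ε², let I_N := {k ∈ {1,…,N} : g(X_k;δ_k)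 ≤ ε}, and let k* ∈ I_N minimize ⟨C, X_k⟩ over k ∈ I_N. If ⟨C, X_{k*}⟩ < −n(1+α)ε, then C is not completely positive. -/
/-!
Write `Y = X_{k*}` and `J` for the all-ones matrix. The output test `g(Y; δ_{k*}) ≤ ε` together
with the oracle accuracy `G(Y) - g(Y; δ_{k*}) ≤ αε` gives `-δᵀYδ ≤ (1+α)ε` on the simplex, and
since `δᵀJδ = 1` there, `Y + (1+α)ε J` is copositive. Copositive matrices pair nonnegatively with
completely positive ones, and `⟨C, J⟩ ≤ ‖C‖_F ‖J‖_F = n` by Cauchy–Schwarz, so a completely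
positive `C` would have `⟨C, Y⟩ ≥ -n(1+α)ε`.
-/

open Matrix

/-- A real symmetric matrix is completely positive if it is a finite sum of
rank-one matrices `a aᵀ` with `a` entrywise nonnegative. -/
def IsCompletelyPositive {n : ℕ} (C : Matrix (Fin n) (Fin n) ℝ) : Prop :=
  ∃ (k : ℕ) (a : Fin k → Fin n → ℝ), (∀ i j, 0 ≤ a i j) ∧
    C = ∑ i, Matrix.vecMulVec (a i) (a i)

section Copositive

variable {ι : Type*} [Fintype ι]

def Matrix.IsCopositive (Y : Matrix ι ι ℝ) : Prop :=
  ∀ x : ι → ℝ, 0 ≤ x → 0 ≤ x ⬝ᵥ Y *ᵥ x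

theorem Matrix.isCopositive_of_forall_stdSimplex {Y : Matrix ι ι ℝ}
    (hY : ∀ d ∈ stdSimplex ℝ ι, 0 ≤ d ⬝ᵥ Y *ᵥ d) : Y.IsCopositive := by
  intro x hx
  set s := ∑ i, x i
  have hs : 0 ≤ s := Finset.sum_nonneg fun i _ => hx i
  rcases hs.eq_or_lt with hs0 | hspos
  · have hx0 : x = 0 := funext fun i =>
      (Finset.sum_eq_zero_iff_of_nonneg fun i _ => hx i).mp hs0.symm i (Finset.mem_univ i)
    simp [hx0]
  · have hd : s⁻¹ • x ∈ stdSimplex ℝ ι :=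
      ⟨fun i => mul_nonneg (inv_nonneg.mpr hs) (hx i), by
        simp only [Pi.smul_apply, smul_eq_mul, ← Finset.mul_sum]
        exact inv_mul_cancel₀ hspos.ne'⟩
    have hx_eq : x = s • s⁻¹ • x := by rw [smul_smul, mul_inv_cancel₀ hspos.ne', one_smul]
    have hquad : x ⬝ᵥ Y *ᵥ x = s * (s * ((s⁻¹ • x) ⬝ᵥ Y *ᵥ (s⁻¹ • x))) := by
      conv_lhs => rw [hx_eq]
      rw [smul_dotProduct, mulVec_smul, dotProduct_smul, smul_eq_mul, smul_eq_mul]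
    rw [hquad]
    exact mul_nonneg hs (mul_nonneg hs (hY _ hd))

theorem Matrix.dotProduct_of_one_mulVec (d : ι → ℝ) :
    d ⬝ᵥ (of fun _ _ => (1 : ℝ)) *ᵥ d = (∑ i, d i) ^ 2 := by
  simp only [dotProduct, mulVec, of_apply, one_mul, ← Finset.sum_mul, sq]

theorem Matrix.isCopositive_add_smul_of_one_of_sSup_le {Y : Matrix ι ι ℝ} {B : ℝ}
    (hB : sSup ((fun d => -(d ⬝ᵥ Y *ᵥ d)) '' stdSimplex ℝ ι) ≤ B) :
    (Y + B • of fun _ _ => 1).IsCopositive := by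
  refine isCopositive_of_forall_stdSimplex fun d hd => ?_
  have hcont : Continuous fun d : ι → ℝ => -(d ⬝ᵥ Y *ᵥ d) := by fun_prop
  have hle : -(d ⬝ᵥ Y *ᵥ d) ≤ B :=
    (le_csSup ((isCompact_stdSimplex ℝ ι).image hcont).bddAbove ⟨d, hd, rfl⟩).trans hB
  rw [add_mulVec, dotProduct_add, smul_mulVec, dotProduct_smul, dotProduct_of_one_mulVec, hd.2,
    one_pow, smul_eq_mul, mul_one]
  linarith

end Copositive

section FrobeniusInnerProduct

variable {n : ℕ}

theorem frobIP_vecMulVec_self_left (a : Fin n → ℝ) (Y : Matrix (Fin n) (Fin n) ℝ) :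
    frobIP (vecMulVec a a) Y = a ⬝ᵥ Y *ᵥ a := by
  simp only [frobIP, vecMulVec_apply, dotProduct, mulVec, Finset.mul_sum]
  exact Finset.sum_congr rfl fun i _ => Finset.sum_congr rfl fun j _ => by ring

theorem frobIP_sum_left {k : ℕ} (A : Fin k → Matrix (Fin n) (Fin n) ℝ)
    (Y : Matrix (Fin n) (Fin n) ℝ) : frobIP (∑ i, A i) Y = ∑ i, frobIP (A i) Y := by
  simp only [frobIP, Matrix.sum_apply, Finset.sum_mul]
  exact (Finset.sum_congr rfl fun _ _ => Finset.sum_comm).trans Finset.sum_comm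

theorem frobIP_add_smul_right (A Y Z : Matrix (Fin n) (Fin n) ℝ) (c : ℝ) :
    frobIP A (Y + c • Z) = frobIP A Y + c * frobIP A Z := by
  simp only [frobIP, Matrix.add_apply, Matrix.smul_apply, smul_eq_mul, Finset.mul_sum,
    ← Finset.sum_add_distrib]
  exact Finset.sum_congr rfl fun _ _ => Finset.sum_congr rfl fun _ _ => by ring

theorem frobIP_le_frobNorm_mul_frobNorm (A B : Matrix (Fin n) (Fin n) ℝ) :
    frobIP A B ≤ frobNorm A * frobNorm B := by
  simpa only [frobNorm, frobIP, sq, Fintype.sum_prod_type] using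
    Real.sum_mul_le_sqrt_mul_sqrt Finset.univ (fun p : Fin n × Fin n => A p.1 p.2)
      (fun p => B p.1 p.2)

theorem frobNorm_of_one : frobNorm (of fun _ _ => (1 : ℝ) : Matrix (Fin n) (Fin n) ℝ) = n := by
  simp [frobNorm, frobIP]

theorem IsCompletelyPositive.frobIP_nonneg {C Y : Matrix (Fin n) (Fin n) ℝ}
    (hC : IsCompletelyPositive C) (hY : Y.IsCopositive) : 0 ≤ frobIP C Y := by
  obtain ⟨k, a, ha, rfl⟩ := hC
  rw [frobIP_sum_left]
  exact Finset.sum_nonneg fun i _ => (frobIP_vecMulVec_self_left (a i) Y).symm ▸ hY _ (ha i)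

end FrobeniusInnerProduct

theorem stmt15_general {n : ℕ}
    (C : Matrix (Fin n) (Fin n) ℝ) (hCnorm : frobNorm C = 1)
    (g : Matrix (Fin n) (Fin n) ℝ → (Fin n → ℝ) → ℝ)
    (hg : ∀ X δ, g X δ = -(δ ⬝ᵥ X.mulVec δ))
    (G : Matrix (Fin n) (Fin n) ℝ → ℝ)
    (hG : ∀ X, G X = sSup (g X '' stdSimplex ℝ (Fin n)))
    (ε α : ℝ) (hε : 0 < ε) (hα : 0 ≤ α)
    -- the iterates
    (X : ℕ → Matrix (Fin n) (Fin n) ℝ) (δ : ℕ → Fin n → ℝ)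
    (hξ : ∀ k, 1 ≤ k → G (X k) - g (X k) (δ k) ≤ α * ε)
    -- the number of iterations and the output index k*
    (N : ℕ) (kstar : ℕ) (hk1 : kstar ∈ Finset.Icc 1 N) (hk2 : g (X kstar) (δ kstar) ≤ ε)
    (hneg : frobIP C (X kstar) < -((n : ℝ) * (1 + α) * ε)) :
    ¬ IsCompletelyPositive C := by
  intro hCP
  set Y := X kstar
  have hGY : sSup ((fun d => -(d ⬝ᵥ Y *ᵥ d)) '' stdSimplex ℝ (Fin n)) ≤ (1 + α) * ε := by
    rw [← funext (hg Y), ← hG]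
    linarith [hξ kstar (Finset.mem_Icc.mp hk1).1]
  have hpair := hCP.frobIP_nonneg (isCopositive_add_smul_of_one_of_sSup_le hGY)
  have hones : frobIP C (of fun _ _ => 1) ≤ n := by
    simpa only [hCnorm, frobNorm_of_one, one_mul] using
      frobIP_le_frobNorm_mul_frobNorm C (of fun _ _ => 1)
  rw [frobIP_add_smul_right] at hpair
  linarith [mul_le_mul_of_nonneg_left hones (by positivity : (0 : ℝ) ≤ (1 + α) * ε)]

theorem stmt15 {n : ℕ} (hn : 0 < n)
    (C : Matrix (Fin n) (Fin n) ℝ) (hCsymm : C.IsSymm) (hCnorm : frobNorm C = 1)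
    (g : Matrix (Fin n) (Fin n) ℝ → (Fin n → ℝ) → ℝ)
    (hg : ∀ X δ, g X δ = -(δ ⬝ᵥ X.mulVec δ))
    (G : Matrix (Fin n) (Fin n) ℝ → ℝ)
    (hG : ∀ X, G X = sSup (g X '' stdSimplex ℝ (Fin n)))
    (ε α : ℝ) (hε : 0 < ε) (hα : 0 ≤ α)
    -- the iterates
    (X : ℕ → Matrix (Fin n) (Fin n) ℝ) (δ : ℕ → Fin n → ℝ)
    (hXsymm : ∀ k, 1 ≤ k → (X k).IsSymm)
    (hXS : ∀ k, 1 ≤ k → frobNorm (X k) ≤ 1)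
    (hX1 : X 1 = 0)
    (hδ : ∀ k, 1 ≤ k → δ k ∈ stdSimplex ℝ (Fin n))
    (hξ : ∀ k, 1 ≤ k → G (X k) - g (X k) (δ k) ≤ α * ε)
    (hstep : ∀ k, 1 ≤ k →
      (g (X k) (δ k) ≤ ε → X (k + 1) = projFrobBall (X k - ε • C)) ∧
      (ε < g (X k) (δ k) → X (k + 1) = projFrobBall
        (X k + (g (X k) (δ k) / Real.sqrt (∑ i, δ k i ^ 2) ^ 4) •
          Matrix.vecMulVec (δ k) (δ k))))
    -- the number of iterations and the output index k*
    (N : ℕ) (hN1 : 1 ≤ N) (hN : (N : ℝ) ≥ 1 / ε ^ 2)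
    (kstar : ℕ) (hk1 : kstar ∈ Finset.Icc 1 N) (hk2 : g (X kstar) (δ kstar) ≤ ε)
    (hkmin : ∀ k ∈ Finset.Icc 1 N, g (X k) (δ k) ≤ ε →
      frobIP C (X kstar) ≤ frobIP C (X k))
    (hneg : frobIP C (X kstar) < -((n : ℝ) * (1 + α) * ε)) :
    ¬ IsCompletelyPositive C :=
  stmt15_general C hCnorm g hg G hG ε α hε hα X δ hξ N kstar hk1 hk2 hneg
end

section
/- Let n be a positive integer, α ≥ 0, ε > 0, and let C and X be real symmetric n×n matrices with ‖C‖_F = 1. If max_{δ ∈ Δ^{n-1}} (−δ^T X δ) ≤ (1+α)ε and ⟨C, X⟩ < −n(1+α)ε, then C is not completely positive. -/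
open Matrix

/-!
Write `C = ∑ aᵢ aᵢᵀ` with `aᵢ ≥ 0`. Rescaling `aᵢ` onto the simplex, the hypothesis on `X` gives
`aᵢᵀ X aᵢ ≥ -(1+α)ε (∑ⱼ aᵢⱼ)²`, and summing over `i` yields `⟨C, X⟩ ≥ -(1+α)ε ∑ₚ,q Cₚq`.
By Cauchy–Schwarz the entry sum of `C` is at most `n ‖C‖_F = n`, so `⟨C, X⟩ ≥ -n(1+α)ε`.
-/

open Finset

section

variable {ι : Type*} [Fintype ι]

lemma sum_sum_le_card_mul_sqrt_sum_sum_mul_self (C : Matrix ι ι ℝ) :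
    ∑ p, ∑ q, C p q ≤ Fintype.card ι * √(∑ p, ∑ q, C p q * C p q) := by
  have h := sq_sum_le_card_mul_sum_sq (s := (univ : Finset (ι × ι))) (f := fun pq => C pq.1 pq.2)
  simp only [← univ_product_univ, sum_product, card_product, card_univ, ← sq] at h
  calc ∑ p, ∑ q, C p q ≤ √((Fintype.card ι : ℝ) ^ 2 * ∑ p, ∑ q, C p q ^ 2) :=
        Real.le_sqrt_of_sq_le (by simpa [sq] using h)
    _ = Fintype.card ι * √(∑ p, ∑ q, C p q * C p q) := by
        rw [Real.sqrt_mul (by positivity), Real.sqrt_sq (by positivity)]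
        simp only [sq]

lemma bddAbove_neg_dotProduct_mulVec_image_stdSimplex (X : Matrix ι ι ℝ) :
    BddAbove ((fun δ : ι → ℝ => -(δ ⬝ᵥ X *ᵥ δ)) '' stdSimplex ℝ ι) :=
  ((isCompact_stdSimplex ℝ ι).image (by fun_prop)).bddAbove

lemma neg_mul_sq_sum_le_dotProduct_mulVec {X : Matrix ι ι ℝ} {μ : ℝ}
    (hX : ∀ δ ∈ stdSimplex ℝ ι, -(δ ⬝ᵥ X *ᵥ δ) ≤ μ) {a : ι → ℝ} (ha : 0 ≤ a) :
    -μ * (∑ i, a i) ^ 2 ≤ a ⬝ᵥ X *ᵥ a := by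
  rcases (sum_nonneg fun i _ => ha i : 0 ≤ ∑ i, a i).eq_or_lt with hs | hs
  · have : a = 0 := funext fun i =>
      (sum_eq_zero_iff_of_nonneg fun i _ => ha i).1 hs.symm i (mem_univ i)
    simp [this]
  · set s := ∑ i, a i
    have hδ : s⁻¹ • a ∈ stdSimplex ℝ ι :=
      ⟨fun i => mul_nonneg (inv_nonneg.2 hs.le) (ha i), by simp [← mul_sum, s, hs.ne']⟩
    have h := hX _ hδ
    rw [mulVec_smul, dotProduct_smul, smul_dotProduct, smul_eq_mul, smul_eq_mul] at h
    calc -μ * s ^ 2 ≤ s ^ 2 * (s⁻¹ * (s⁻¹ * (a ⬝ᵥ X *ᵥ a))) := by nlinarith [sq_nonneg s]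
      _ = a ⬝ᵥ X *ᵥ a := by field_simp

lemma sum_sum_vecMulVec_mul (a b : ι → ℝ) (X : Matrix ι ι ℝ) :
    ∑ p, ∑ q, vecMulVec a b p q * X p q = a ⬝ᵥ X *ᵥ b := by
  simp only [vecMulVec_apply, dotProduct, mulVec, mul_sum]
  exact sum_congr rfl fun p _ => sum_congr rfl fun q _ => by ring

lemma sum_sum_vecMulVec (a b : ι → ℝ) :
    ∑ p, ∑ q, vecMulVec a b p q = (∑ p, a p) * ∑ q, b q := by
  simp only [vecMulVec_apply, sum_mul_sum]

end

lemma IsCompletelyPositive.neg_mul_sum_sum_le_sum_sum_mul {n : ℕ} {C X : Matrix (Fin n) (Fin n) ℝ}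
    {μ : ℝ} (hC : IsCompletelyPositive C)
    (hX : ∀ δ ∈ stdSimplex ℝ (Fin n), -(δ ⬝ᵥ X *ᵥ δ) ≤ μ) :
    -μ * ∑ p, ∑ q, C p q ≤ ∑ p, ∑ q, C p q * X p q := by
  obtain ⟨k, a, ha, rfl⟩ := hC
  have hswap : ∀ f : Fin k → Fin n → Fin n → ℝ,
      ∑ p, ∑ q, ∑ i, f i p q = ∑ i, ∑ p, ∑ q, f i p q := fun f =>
    (sum_congr rfl fun p _ => sum_comm).trans sum_comm
  calc -μ * ∑ p, ∑ q, (∑ i, vecMulVec (a i) (a i)) p q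
      = ∑ i, -μ * (∑ j, a i j) ^ 2 := by
        simp only [Matrix.sum_apply]
        rw [hswap fun i p q => vecMulVec (a i) (a i) p q, mul_sum]
        simp only [sum_sum_vecMulVec, sq]
    _ ≤ ∑ i, a i ⬝ᵥ X *ᵥ a i :=
        sum_le_sum fun i _ => neg_mul_sq_sum_le_dotProduct_mulVec hX (ha i)
    _ = ∑ p, ∑ q, (∑ i, vecMulVec (a i) (a i)) p q * X p q := by
        simp only [Matrix.sum_apply, sum_mul]
        rw [hswap fun i p q => vecMulVec (a i) (a i) p q * X p q]
        simp only [sum_sum_vecMulVec_mul]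

theorem stmt16_general {n : ℕ} (α ε : ℝ) (hα : 0 ≤ α) (hε : 0 < ε)
    (C X : Matrix (Fin n) (Fin n) ℝ)
    (hCnorm : Real.sqrt (∑ i, ∑ j, C i j * C i j) = 1)
    (hmax : sSup ((fun δ : Fin n → ℝ => -(δ ⬝ᵥ X.mulVec δ)) '' stdSimplex ℝ (Fin n)) ≤
      (1 + α) * ε)
    (hip : ∑ i, ∑ j, C i j * X i j < -((n : ℝ) * (1 + α) * ε)) :
    ¬ IsCompletelyPositive C := by
  intro hC
  have hX : ∀ δ ∈ stdSimplex ℝ (Fin n), -(δ ⬝ᵥ X *ᵥ δ) ≤ (1 + α) * ε := fun δ hδ =>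
    (le_csSup (bddAbove_neg_dotProduct_mulVec_image_stdSimplex X) ⟨δ, hδ, rfl⟩).trans hmax
  have hsum : ∑ p, ∑ q, C p q ≤ n := by
    simpa [hCnorm] using sum_sum_le_card_mul_sqrt_sum_sum_mul_self C
  have hμ : 0 ≤ (1 + α) * ε := by positivity
  refine not_le.2 hip ?_
  calc -((n : ℝ) * (1 + α) * ε) = -((1 + α) * ε) * n := by ring
    _ ≤ -((1 + α) * ε) * ∑ p, ∑ q, C p q := mul_le_mul_of_nonpos_left hsum (neg_nonpos.2 hμ)
    _ ≤ ∑ p, ∑ q, C p q * X p q := hC.neg_mul_sum_sum_le_sum_sum_mul hX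

theorem stmt16 {n : ℕ} (hn : 0 < n) (α ε : ℝ) (hα : 0 ≤ α) (hε : 0 < ε)
    (C X : Matrix (Fin n) (Fin n) ℝ) (hCsymm : C.IsSymm) (hXsymm : X.IsSymm)
    (hCnorm : Real.sqrt (∑ i, ∑ j, C i j * C i j) = 1)
    (hmax : sSup ((fun δ : Fin n → ℝ => -(δ ⬝ᵥ X.mulVec δ)) '' stdSimplex ℝ (Fin n)) ≤
      (1 + α) * ε)
    (hip : ∑ i, ∑ j, C i j * X i j < -((n : ℝ) * (1 + α) * ε)) :
    ¬ IsCompletelyPositive C :=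
  stmt16_general α ε hα hε C X hCnorm hmax hip
end
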